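/- Let G = (V, E) be a graph with a linear order < on E. Then the sum over all spanning forests F of G of 2^{i(F)+e(F)} equals 2^{|E|}, where i(F) and e(F) denote the numbers of internally and externally active edges of F. -/

import Mathlib

open Finset

attribute [local instance] Classical.propDecidable

/-- A multigraph on vertex type `V` with edge index type `E` is given by a map
`ends : E → Sym2 V` (loops and parallel edges are allowed).  For an edge subset
`A ⊆ E`, `edgeGraph ends A` is the simple graph on `V` whose adjacency is
witnessed by some edge of `A`; it determines the connected components of the
spanning subgraph `(V, A)`. -/
def edgeGraph {V E : Type} (ends : E → Sym2 V) (A : Finset E) : SimpleGraph V where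
  Adj a b := a ≠ b ∧ ∃ e ∈ A, ends e = s(a, b)
  symm := ⟨by
    rintro a b ⟨hab, e, he, hs⟩
    exact ⟨Ne.symm hab, e, he, by rw [hs, Sym2.eq_swap]⟩⟩
  loopless := ⟨by rintro a ⟨h, -⟩; exact h rfl⟩

/-- `kc ends A` is the number of connected components of the spanning subgraph `(V, A)`. -/
noncomputable def kc {V E : Type} (ends : E → Sym2 V) (A : Finset E) : ℕ :=
  Nat.card (edgeGraph ends A).ConnectedComponent

/-- `(V, A)` is a spanning forest of `(V, E)`: it is a forest
(`|A| + k((V,A)) = |V|`, which rules out loops, parallel edges and cycles)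
with as many connected components as the whole graph. -/
def IsSpanningForest {V E : Type} [Fintype V] [Fintype E] (ends : E → Sym2 V)
    (A : Finset E) : Prop :=
  A.card + kc ends A = Fintype.card V ∧ kc ends A = kc ends Finset.univ

/-- `F - e + f`. -/
def swapEdge {E : Type} [DecidableEq E] (A : Finset E) (e f : E) : Finset E :=
  insert f (A.erase e)

/-- `e` is internally active in the spanning forest `(V, A)`. -/
def InternallyActive {V E : Type} [Fintype V] [Fintype E] [DecidableEq E] [LinearOrder E]
    (ends : E → Sym2 V) (A : Finset E) (e : E) : Prop :=
  e ∈ A ∧ ¬ ∃ f, f ∉ A ∧ e < f ∧ IsSpanningForest ends (swapEdge A e f)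

/-- `f` is externally active in the spanning forest `(V, A)`. -/
def ExternallyActive {V E : Type} [Fintype V] [Fintype E] [DecidableEq E] [LinearOrder E]
    (ends : E → Sym2 V) (A : Finset E) (f : E) : Prop :=
  f ∉ A ∧ ¬ ∃ e, e ∈ A ∧ f < e ∧ IsSpanningForest ends (swapEdge A e f)

/-- The set `E_i(F)` of internally active edges of the spanning forest `F = (V, A)`. -/
noncomputable def intAct {V E : Type} [Fintype V] [Fintype E] [DecidableEq E] [LinearOrder E]
    (ends : E → Sym2 V) (A : Finset E) : Finset E :=
  Finset.univ.filter (InternallyActive ends A)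

/-- The set `E_e(F)` of externally active edges of the spanning forest `F = (V, A)`. -/
noncomputable def extAct {V E : Type} [Fintype V] [Fintype E] [DecidableEq E] [LinearOrder E]
    (ends : E → Sym2 V) (A : Finset E) : Finset E :=
  Finset.univ.filter (ExternallyActive ends A)

/-! Deletion–contraction on the least edge `g`. Since `g` is least, an exchange with `g` never
witnesses that another edge is inactive, so the spanning forests of `G` avoiding (containing) `g`
are those of `G \ g` (of `G / g`), with the same activities of the other edges. The edge `g` itself
is externally active in every spanning forest if it is a loop, internally active in every spanning
forest if it is an isthmus, and never active otherwise. Writing `S(G)` for the sum, this gives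
`S(G) = 2 S(G \ g)` for a loop, `S(G) = 2 S(G / g)` for an isthmus and `S(G) = S(G / g) + S(G \ g)`
otherwise, hence `S(G) = 2 ^ |E|` by induction on `|E|`. -/

open SimpleGraph

lemma card_swapEdge {E : Type} [DecidableEq E] {A : Finset E} {e g : E} (he : e ∈ A)
    (hg : g ∉ A) : (swapEdge A e g).card = A.card := by
  rw [swapEdge, Finset.card_insert_of_notMem (fun h => hg (Finset.mem_of_mem_erase h)),
    Finset.card_erase_add_one he]

section EdgeGraph

variable {V E : Type} {ends : E → Sym2 V}

lemma edgeGraph_mono {A B : Finset E} (h : A ⊆ B) : edgeGraph ends A ≤ edgeGraph ends B := by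
  rintro a b ⟨hab, e, he, hs⟩
  exact ⟨hab, e, h he, hs⟩

lemma edgeGraph_empty : edgeGraph ends ∅ = ⊥ := by
  ext a b
  simp [edgeGraph]

lemma reachable_edgeGraph_of_mem {A : Finset E} {e : E} {a b : V} (he : e ∈ A)
    (hs : ends e = s(a, b)) : (edgeGraph ends A).Reachable a b := by
  obtain rfl | hab := eq_or_ne a b
  · rfl
  · exact Adj.reachable ⟨hab, e, he, hs⟩

lemma reachable_insert_cases [DecidableEq E] {A : Finset E} {g : E} {a b u w : V}
    (hg : ends g = s(a, b)) (h : (edgeGraph ends (insert g A)).Reachable u w) :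
    (edgeGraph ends A).Reachable u w ∨
      ((edgeGraph ends A).Reachable u a ∧ (edgeGraph ends A).Reachable b w) ∨
      ((edgeGraph ends A).Reachable u b ∧ (edgeGraph ends A).Reachable a w) := by
  obtain ⟨p⟩ := h
  induction p with
  | nil => exact Or.inl .rfl
  | @cons x y z hadj p ih =>
    obtain ⟨hxy, e, he, hs⟩ := hadj
    rcases Finset.mem_insert.mp he with rfl | heA
    · rw [hg] at hs
      rcases Sym2.eq_iff.mp hs.symm with ⟨rfl, rfl⟩ | ⟨rfl, rfl⟩
      · rcases ih with h | ⟨-, h⟩ | ⟨-, h⟩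
        · exact Or.inr (Or.inl ⟨.rfl, h⟩)
        · exact Or.inr (Or.inl ⟨.rfl, h⟩)
        · exact Or.inl h
      · rcases ih with h | ⟨-, h⟩ | ⟨-, h⟩
        · exact Or.inr (Or.inr ⟨.rfl, h⟩)
        · exact Or.inl h
        · exact Or.inr (Or.inr ⟨.rfl, h⟩)
    · have hr : (edgeGraph ends A).Reachable x y := Adj.reachable ⟨hxy, e, heA, hs⟩
      rcases ih with h | ⟨h₁, h₂⟩ | ⟨h₁, h₂⟩
      · exact Or.inl (hr.trans h)
      · exact Or.inr (Or.inl ⟨hr.trans h₁, h₂⟩)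
      · exact Or.inr (Or.inr ⟨hr.trans h₁, h₂⟩)

lemma reachable_erase_of_notMem_support [DecidableEq E] {A : Finset E} {e₀ : E} {a c : V}
    (hs : ends e₀ = s(a, c)) {u v : V} (p : (edgeGraph ends A).Walk u v) (ha : a ∉ p.support) :
    (edgeGraph ends (A.erase e₀)).Reachable u v := by
  refine ⟨p.transfer _ fun s hps => ?_⟩
  induction s using Sym2.ind with | h x y =>
  obtain ⟨hxy, f, hf, hfs⟩ := p.adj_of_mem_edges hps
  refine ⟨hxy, f, Finset.mem_erase.mpr ⟨?_, hf⟩, hfs⟩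
  rintro rfl
  rcases Sym2.mem_iff.mp (hfs ▸ hs ▸ Sym2.mem_mk_left a c : a ∈ s(x, y)) with rfl | rfl
  exacts [ha (p.fst_mem_support_of_mem_edges hps), ha (p.snd_mem_support_of_mem_edges hps)]

end EdgeGraph

lemma SimpleGraph.natCard_connectedComponent_eq_of_reachable_iff {V β : Type}
    {G : SimpleGraph V} (f : V → β) (hf : Function.Surjective f)
    (h : ∀ u w, G.Reachable u w ↔ f u = f w) : Nat.card G.ConnectedComponent = Nat.card β := by
  refine Nat.card_eq_of_bijective (ConnectedComponent.lift f fun u w p _ => (h u w).mp ⟨p⟩)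
    ⟨fun c₁ c₂ hc => ?_, fun y => ?_⟩
  · induction c₁, c₂ using ConnectedComponent.ind₂ with | h u w =>
    exact ConnectedComponent.sound ((h u w).mpr hc)
  · obtain ⟨v, rfl⟩ := hf y
    exact ⟨G.connectedComponentMk v, rfl⟩

lemma SimpleGraph.Reachable.of_forall_adj {V W : Type} {G : SimpleGraph V} {H : SimpleGraph W}
    (f : V → W) (h : ∀ x y, G.Adj x y → H.Reachable (f x) (f y)) {u v : V}
    (huv : G.Reachable u v) : H.Reachable (f u) (f v) := by
  rw [reachable_iff_reflTransGen] at huv ⊢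
  exact huv.lift' f fun x y hxy => (reachable_iff_reflTransGen _ _).mp (h x y hxy)

section Components

variable {V E : Type} {ends : E → Sym2 V}

lemma kc_anti [Finite V] {A B : Finset E} (h : A ⊆ B) : kc ends B ≤ kc ends A :=
  ConnectedComponent.card_le_card_of_le (edgeGraph_mono h)

lemma kc_empty [Fintype V] : kc ends (∅ : Finset E) = Fintype.card V := by
  rw [kc, ← Nat.card_eq_fintype_card, edgeGraph_empty]
  exact natCard_connectedComponent_eq_of_reachable_iff id Function.surjective_id
    fun _ _ => reachable_bot

variable [DecidableEq E] {A : Finset E} {g : E} {a b : V}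

lemma kc_insert_of_reachable (hg : ends g = s(a, b)) (hab : (edgeGraph ends A).Reachable a b) :
    kc ends (insert g A) = kc ends A := by
  refine (natCard_connectedComponent_eq_of_reachable_iff
    (edgeGraph ends (insert g A)).connectedComponentMk Quot.mk_surjective fun u w => ?_).symm
  rw [ConnectedComponent.eq]
  refine ⟨fun h => h.mono (edgeGraph_mono (Finset.subset_insert g A)), fun h => ?_⟩
  rcases reachable_insert_cases hg h with h | ⟨h₁, h₂⟩ | ⟨h₁, h₂⟩
  · exact h
  · exact h₁.trans (hab.trans h₂)
  · exact h₁.trans (hab.symm.trans h₂)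

lemma kc_insert_add_one_of_not_reachable [Finite V] (hg : ends g = s(a, b))
    (hab : ¬(edgeGraph ends A).Reachable a b) : kc ends (insert g A) + 1 = kc ends A := by
  set G := edgeGraph ends A
  set G' := edgeGraph ends (insert g A)
  have hGG' : G ≤ G' := edgeGraph_mono (Finset.subset_insert g A)
  have hG'ab : G'.Reachable a b := reachable_edgeGraph_of_mem (Finset.mem_insert_self g A) hg
  let f : V → Option G'.ConnectedComponent := fun v =>
    if G.Reachable v b then none else some (G'.connectedComponentMk v)
  have hf : Function.Surjective f := by
    rintro (_ | c)
    · exact ⟨b, if_pos .rfl⟩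
    · induction c using ConnectedComponent.ind with | h u =>
      by_cases hu : G.Reachable u b
      · refine ⟨a, (if_neg hab).trans (congrArg some (ConnectedComponent.sound ?_))⟩
        exact hG'ab.trans (hu.symm.mono hGG')
      · exact ⟨u, if_neg hu⟩
  have hcard := natCard_connectedComponent_eq_of_reachable_iff (G := G) f hf fun u w => ?_
  · rw [Finite.card_option] at hcard
    exact hcard.symm
  simp only [f]
  split_ifs with hu hw hw
  · exact iff_of_true (hu.trans hw.symm) rfl
  · exact iff_of_false (fun h => hw (h.symm.trans hu)) (by simp)
  · exact iff_of_false (fun h => hu (h.trans hw)) (by simp)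
  · rw [Option.some_inj, ConnectedComponent.eq]
    refine ⟨fun h => h.mono hGG', fun h => ?_⟩
    rcases reachable_insert_cases hg h with h | ⟨-, h⟩ | ⟨h, -⟩
    · exact h
    · exact absurd h.symm hw
    · exact absurd h hu

lemma kc_le_kc_insert_add_one [Finite V] (A : Finset E) (g : E) :
    kc ends A ≤ kc ends (insert g A) + 1 := by
  induction hg : ends g using Sym2.ind with | h a b =>
  by_cases hab : (edgeGraph ends A).Reachable a b
  · rw [kc_insert_of_reachable hg hab]
    omega
  · rw [kc_insert_add_one_of_not_reachable hg hab]

lemma reachable_of_kc_le_kc_insert [Finite V] (hg : ends g = s(a, b))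
    (h : kc ends A ≤ kc ends (insert g A)) : (edgeGraph ends A).Reachable a b := by
  by_contra hab
  have := kc_insert_add_one_of_not_reachable hg hab
  omega

lemma kc_union_of_forall_kc_le_kc_insert [Finite V] {B : Finset E}
    (h : ∀ f ∈ B, kc ends A ≤ kc ends (insert f A)) : kc ends (A ∪ B) = kc ends A := by
  induction B using Finset.induction_on with
  | empty => rw [Finset.union_empty]
  | @insert f B hf ih =>
    rw [Finset.forall_mem_insert] at h
    induction hg : ends f using Sym2.ind with | h a b =>
    rw [Finset.union_insert, kc_insert_of_reachable hg, ih h.2]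
    exact (reachable_of_kc_le_kc_insert hg h.1).mono (edgeGraph_mono Finset.subset_union_left)

end Components

section Forests

variable {V E : Type} [Fintype V] [DecidableEq E] {ends : E → Sym2 V} {A : Finset E} {e : E}

lemma card_le_card_add_kc (A : Finset E) : Fintype.card V ≤ A.card + kc ends A := by
  induction A using Finset.induction_on with
  | empty => simp [kc_empty]
  | @insert e A he ih =>
    have := kc_le_kc_insert_add_one (ends := ends) A e
    rw [Finset.card_insert_of_notMem he]
    omega

lemma not_reachable_erase_of_forest (hA : A.card + kc ends A = Fintype.card V) (he : e ∈ A)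
    {a b : V} (hs : ends e = s(a, b)) : ¬(edgeGraph ends (A.erase e)).Reachable a b := by
  intro hab
  have hkc := kc_insert_of_reachable hs hab
  have hle := card_le_card_add_kc (ends := ends) (A.erase e)
  rw [Finset.insert_erase he] at hkc
  rw [Finset.card_erase_of_mem he] at hle
  have := Finset.card_pos.mpr ⟨e, he⟩
  omega

lemma kc_erase_of_forest (hA : A.card + kc ends A = Fintype.card V) (he : e ∈ A) :
    kc ends (A.erase e) = kc ends A + 1 := by
  induction hs : ends e using Sym2.ind with | h a b =>
  have := kc_insert_add_one_of_not_reachable hs (not_reachable_erase_of_forest hA he hs)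
  rw [Finset.insert_erase he] at this
  omega

lemma not_isDiag_of_forest (hA : A.card + kc ends A = Fintype.card V) (he : e ∈ A) :
    ¬(ends e).IsDiag := by
  induction hs : ends e using Sym2.ind with | h a b =>
  rw [Sym2.mk_isDiag_iff]
  rintro rfl
  exact not_reachable_erase_of_forest hA he hs .rfl

end Forests

section SpanningForests

variable {V E : Type} [Fintype E] {ends : E → Sym2 V} {A B : Finset E} {e g : E}

lemma IsSpanningForest.of_card_eq_of_kc_le [Fintype V] (hA : IsSpanningForest ends A)
    (hcard : B.card = A.card) (hkc : kc ends B ≤ kc ends A) : IsSpanningForest ends B := by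
  have := card_le_card_add_kc (ends := ends) B
  have := kc_anti (ends := ends) (Finset.subset_univ B)
  have := hA.1
  have := hA.2
  constructor <;> omega

variable [DecidableEq E]

def IsIsthmus (ends : E → Sym2 V) (g : E) : Prop :=
  kc ends Finset.univ < kc ends (Finset.univ.erase g)

lemma not_isIsthmus_of_isDiag (hg : (ends g).IsDiag) : ¬IsIsthmus ends g := by
  induction hs : ends g using Sym2.ind with | h a b =>
  rw [hs, Sym2.mk_isDiag_iff] at hg
  subst hg
  have hkc := kc_insert_of_reachable (A := Finset.univ.erase g) hs .rfl
  rw [Finset.insert_erase (Finset.mem_univ g)] at hkc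
  rw [IsIsthmus, hkc]
  exact lt_irrefl _

variable [Fintype V]

lemma IsSpanningForest.not_isDiag (hA : IsSpanningForest ends A) (he : e ∈ A) :
    ¬(ends e).IsDiag :=
  not_isDiag_of_forest hA.1 he

lemma IsSpanningForest.mem_of_isIsthmus (hA : IsSpanningForest ends A) (hg : IsIsthmus ends g) :
    g ∈ A := by
  by_contra hgA
  have := kc_anti (ends := ends) (Finset.subset_erase.mpr ⟨Finset.subset_univ A, hgA⟩)
  have := hA.2
  exact absurd hg (by unfold IsIsthmus; omega)

lemma IsSpanningForest.exists_isSpanningForest_swapEdge_of_mem (hA : IsSpanningForest ends A)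
    (hg : g ∈ A) (hgi : ¬IsIsthmus ends g) :
    ∃ f ∉ A, f ≠ g ∧ IsSpanningForest ends (swapEdge A g f) := by
  have herase := kc_erase_of_forest hA.1 hg
  obtain ⟨f, hf, hlt⟩ :
      ∃ f ∈ Finset.univ.erase g, kc ends (insert f (A.erase g)) < kc ends (A.erase g) := by
    by_contra! h
    have hkc := kc_union_of_forall_kc_le_kc_insert h
    rw [Finset.union_eq_right.mpr (Finset.erase_subset_erase g (Finset.subset_univ A))] at hkc
    have := hA.2
    exact hgi (by unfold IsIsthmus; omega)
  have hfg : f ≠ g := Finset.ne_of_mem_erase hf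
  have hfA : f ∉ A := fun hfA => by
    rw [Finset.insert_eq_of_mem (Finset.mem_erase.mpr ⟨hfg, hfA⟩)] at hlt
    exact lt_irrefl _ hlt
  exact ⟨f, hfA, hfg, hA.of_card_eq_of_kc_le (card_swapEdge hg hfA) (by rw [swapEdge]; omega)⟩

lemma IsSpanningForest.exists_isSpanningForest_swapEdge_of_notMem (hA : IsSpanningForest ends A)
    (hg : g ∉ A) (hgd : ¬(ends g).IsDiag) :
    ∃ e ∈ A, IsSpanningForest ends (swapEdge A e g) := by
  induction hs : ends g using Sym2.ind with | h a b =>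
  rw [hs, Sym2.mk_isDiag_iff] at hgd
  have hab : (edgeGraph ends A).Reachable a b :=
    reachable_of_kc_le_kc_insert hs (hA.2 ▸ kc_anti (Finset.subset_univ _))
  -- the first edge of a path from `a` to `b` in `A` can be exchanged for `g`
  obtain ⟨p, hp⟩ := hab.some.toPath
  cases p with
  | nil => exact absurd rfl hgd
  | @cons _ c _ hac q =>
    have ha := ((Walk.cons_isPath_iff _ _).mp hp).2
    obtain ⟨-, e₀, he₀, hs₀⟩ := hac
    have hcb := reachable_erase_of_notMem_support hs₀ q ha
    refine ⟨e₀, he₀, hA.of_card_eq_of_kc_le (card_swapEdge he₀ hg) ?_⟩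
    have hac : (edgeGraph ends (swapEdge A e₀ g)).Reachable a c :=
      (reachable_edgeGraph_of_mem (Finset.mem_insert_self _ _) hs).trans
        (hcb.symm.mono (edgeGraph_mono (Finset.subset_insert _ _)))
    rw [← kc_insert_of_reachable hs₀ hac, swapEdge, Finset.insert_comm,
      Finset.insert_erase he₀]
    exact kc_anti (Finset.subset_insert g A)

end SpanningForests

section Minors

variable {V E : Type} {ends : E → Sym2 V} {g : E}

def liftEdges (g : E) (A' : Finset {e : E // e ≠ g}) : Finset E :=
  A'.map (Function.Embedding.subtype _)

def deleteEnds (ends : E → Sym2 V) (g : E) : {e : E // e ≠ g} → Sym2 V :=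
  fun e => ends e

/-- Contracting the edge `g = ab` renames `b` to `a`; `b` stays behind as an isolated vertex, so the
vertex type does not change and `b` accounts for one extra component. -/
noncomputable def contractEnds (ends : E → Sym2 V) (g : E) (a b : V) :
    {e : E // e ≠ g} → Sym2 V :=
  fun e => (ends e).map (Function.update id b a)

@[simp]
lemma mem_liftEdges {A' : Finset {e : E // e ≠ g}} {x : {e : E // e ≠ g}} :
    (x : E) ∈ liftEdges g A' ↔ x ∈ A' :=
  Finset.mem_map' _

lemma notMem_liftEdges_self (A' : Finset {e : E // e ≠ g}) : g ∉ liftEdges g A' := by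
  simp [liftEdges]

lemma card_liftEdges (A' : Finset {e : E // e ≠ g}) : (liftEdges g A').card = A'.card :=
  Finset.card_map _

lemma edgeGraph_deleteEnds (A' : Finset {e : E // e ≠ g}) :
    edgeGraph (deleteEnds ends g) A' = edgeGraph ends (liftEdges g A') := by
  ext x y
  simp [edgeGraph, deleteEnds, liftEdges]

lemma kc_deleteEnds (A' : Finset {e : E // e ≠ g}) :
    kc (deleteEnds ends g) A' = kc ends (liftEdges g A') := by
  rw [kc, kc, edgeGraph_deleteEnds]

variable [DecidableEq E]

lemma liftEdges_univ [Fintype E] :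
    liftEdges g (Finset.univ : Finset {e : E // e ≠ g}) = Finset.univ.erase g := by
  ext x
  by_cases hx : x = g <;> simp [liftEdges, hx]

lemma liftEdges_subtype (F : Finset E) : liftEdges g (F.subtype (· ≠ g)) = F.erase g := by
  rw [liftEdges, Finset.subtype_map, Finset.filter_ne']

lemma subtype_liftEdges (A' : Finset {e : E // e ≠ g}) :
    (liftEdges g A').subtype (· ≠ g) = A' := by
  ext x
  rw [Finset.mem_subtype, mem_liftEdges]

lemma subtype_insert_liftEdges (A' : Finset {e : E // e ≠ g}) :
    (insert g (liftEdges g A')).subtype (· ≠ g) = A' := by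
  ext x
  rw [Finset.mem_subtype, Finset.mem_insert, mem_liftEdges, or_iff_right x.2]

lemma liftEdges_swapEdge (A' : Finset {e : E // e ≠ g}) (x y : {e : E // e ≠ g}) :
    liftEdges g (swapEdge A' x y) = swapEdge (liftEdges g A') x y := by
  rw [swapEdge, swapEdge, liftEdges, Finset.map_insert, Finset.map_erase]
  rfl

lemma insert_liftEdges_swapEdge (A' : Finset {e : E // e ≠ g}) (x y : {e : E // e ≠ g}) :
    insert g (liftEdges g (swapEdge A' x y)) = swapEdge (insert g (liftEdges g A')) x y := by
  rw [liftEdges_swapEdge, swapEdge, swapEdge, Finset.erase_insert_of_ne (Ne.symm x.2),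
    Finset.insert_comm]

variable {a b : V}

lemma reachable_update_id (hg : ends g = s(a, b)) (A' : Finset {e : E // e ≠ g}) (v : V) :
    (edgeGraph ends (insert g (liftEdges g A'))).Reachable v (Function.update id b a v) := by
  obtain rfl | hv := eq_or_ne v b
  · rw [Function.update_self]
    exact (reachable_edgeGraph_of_mem (Finset.mem_insert_self _ _) hg).symm
  · rw [Function.update_of_ne hv, id]

lemma adj_contractEnds (hg : ends g = s(a, b)) (hab : a ≠ b) {A' : Finset {e : E // e ≠ g}}
    {x y : V} (h : (edgeGraph (contractEnds ends g a b) A').Adj x y) :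
    x ≠ b ∧ (edgeGraph ends (insert g (liftEdges g A'))).Reachable x y := by
  obtain ⟨-, e, he, hs⟩ := h
  induction hes : ends e.1 using Sym2.ind with | h p r =>
  rw [contractEnds, hes, Sym2.map_mk, Sym2.eq_iff] at hs
  have hpr : (edgeGraph ends (insert g (liftEdges g A'))).Reachable p r :=
    reachable_edgeGraph_of_mem (Finset.mem_insert_of_mem (mem_liftEdges.mpr he)) hes
  have hne : ∀ v, Function.update id b a v ≠ b := fun v => by
    obtain rfl | hv := eq_or_ne v b
    · rwa [Function.update_self]
    · rwa [Function.update_of_ne hv]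
  have hp := reachable_update_id hg A' p
  have hr := reachable_update_id hg A' r
  rcases hs with ⟨rfl, rfl⟩ | ⟨rfl, rfl⟩
  · exact ⟨hne p, hp.symm.trans (hpr.trans hr)⟩
  · exact ⟨hne r, hr.symm.trans (hpr.symm.trans hp)⟩

lemma kc_contractEnds [Finite V] (hg : ends g = s(a, b)) (hab : a ≠ b)
    (A' : Finset {e : E // e ≠ g}) :
    kc (contractEnds ends g a b) A' = kc ends (insert g (liftEdges g A')) + 1 := by
  set G := edgeGraph (contractEnds ends g a b) A'
  set G' := edgeGraph ends (insert g (liftEdges g A'))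
  have hG'G : ∀ {u w}, G'.Reachable u w →
      G.Reachable (Function.update id b a u) (Function.update id b a w) := by
    refine Reachable.of_forall_adj _ fun x y hxy => ?_
    obtain ⟨-, e, he, hs⟩ := hxy
    rcases Finset.mem_insert.mp he with rfl | he
    · rcases Sym2.eq_iff.mp (hg.symm.trans hs) with ⟨rfl, rfl⟩ | ⟨rfl, rfl⟩ <;>
        simp [Function.update_of_ne hab]
    · obtain ⟨e', he', rfl⟩ := Finset.mem_map.mp he
      exact reachable_edgeGraph_of_mem he' (by rw [contractEnds, ← Sym2.map_mk, ← hs]; rfl)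
  have hGG' : ∀ {u w}, G.Reachable u w → G'.Reachable u w :=
    Reachable.of_forall_adj id fun x y h => (adj_contractEnds hg hab h).2
  have hb : ∀ {w}, G.Reachable b w → w = b := by
    rintro w ⟨_ | ⟨h, -⟩⟩
    · rfl
    · exact absurd rfl (adj_contractEnds hg hab h).1
  let f : V → Option G'.ConnectedComponent := fun v =>
    if v = b then none else some (G'.connectedComponentMk v)
  have hf : Function.Surjective f := by
    rintro (_ | c)
    · exact ⟨b, if_pos rfl⟩
    · induction c using ConnectedComponent.ind with | h u =>
      obtain rfl | hu := eq_or_ne u b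
      · refine ⟨a, (if_neg hab).trans (congrArg some (ConnectedComponent.sound ?_))⟩
        exact reachable_edgeGraph_of_mem (Finset.mem_insert_self _ _) hg
      · exact ⟨u, if_neg hu⟩
  have hcard := natCard_connectedComponent_eq_of_reachable_iff (G := G) f hf fun u w => ?_
  · rw [Finite.card_option] at hcard
    exact hcard
  simp only [f]
  split_ifs with hu hw hw
  · exact iff_of_true (hu ▸ hw ▸ .rfl) rfl
  · exact iff_of_false (fun h => hw (hb (hu ▸ h))) (by simp)
  · exact iff_of_false (fun h => hu (hb (hw ▸ h.symm))) (by simp)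
  · rw [Option.some_inj, ConnectedComponent.eq]
    refine ⟨hGG', fun h => ?_⟩
    simpa [Function.update_of_ne hu, Function.update_of_ne hw] using hG'G h

end Minors

lemma Finset.card_filter_univ_eq_card_filter_subtype_ne_add {E : Type} [Fintype E] [DecidableEq E]
    (g : E) (P : E → Prop) [DecidablePred P] (Q : {e : E // e ≠ g} → Prop) [DecidablePred Q]
    (h : ∀ x : {e : E // e ≠ g}, P x ↔ Q x) :
    (Finset.univ.filter P).card = (Finset.univ.filter Q).card + if P g then 1 else 0 := by
  rw [Finset.card_filter, Finset.card_filter, Fintype.sum_eq_add_sum_subtype_ne _ g, add_comm]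
  simp only [h]

section Activity

variable {V E : Type} [Fintype V] [Fintype E]

noncomputable def spanningForests (ends : E → Sym2 V) : Finset (Finset E) :=
  Finset.univ.powerset.filter (IsSpanningForest ends)

lemma mem_spanningForests {ends : E → Sym2 V} {F : Finset E} :
    F ∈ spanningForests ends ↔ IsSpanningForest ends F := by
  simp [spanningForests]

variable [DecidableEq E] [LinearOrder E]

noncomputable def activity (ends : E → Sym2 V) (F : Finset E) : ℕ :=
  (intAct ends F).card + (extAct ends F).card

noncomputable def activitySum (ends : E → Sym2 V) : ℕ :=
  ∑ F ∈ spanningForests ends, 2 ^ activity ends F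

end Activity

section ForestLift

variable {V V' E : Type} [Fintype V] [Fintype V'] [Fintype E] [DecidableEq E] {ends : E → Sym2 V}
  {g : E} {a b : V}

lemma isSpanningForest_deleteEnds_iff (hg : ¬IsIsthmus ends g) (A' : Finset {e : E // e ≠ g}) :
    IsSpanningForest (deleteEnds ends g) A' ↔ IsSpanningForest ends (liftEdges g A') := by
  have hkc : kc ends (Finset.univ.erase g) = kc ends Finset.univ :=
    le_antisymm (not_lt.mp hg) (kc_anti (Finset.erase_subset _ _))
  rw [IsSpanningForest, IsSpanningForest, kc_deleteEnds, kc_deleteEnds, liftEdges_univ,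
    card_liftEdges, hkc]

lemma isSpanningForest_contractEnds_iff (hg : ends g = s(a, b)) (hab : a ≠ b)
    (A' : Finset {e : E // e ≠ g}) :
    IsSpanningForest (contractEnds ends g a b) A' ↔
      IsSpanningForest ends (insert g (liftEdges g A')) := by
  have huniv := kc_contractEnds hg hab (Finset.univ : Finset {e : E // e ≠ g})
  rw [liftEdges_univ, Finset.insert_erase (Finset.mem_univ g)] at huniv
  rw [IsSpanningForest, IsSpanningForest, kc_contractEnds hg hab, huniv,
    Finset.card_insert_of_notMem (notMem_liftEdges_self _), card_liftEdges]
  omega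

structure IsForestLift (ends : E → Sym2 V) (ends' : {e : E // e ≠ g} → Sym2 V')
    (Φ : Finset {e : E // e ≠ g} → Finset E) : Prop where
  mem_iff (A' : Finset {e : E // e ≠ g}) (x : {e : E // e ≠ g}) : (x : E) ∈ Φ A' ↔ x ∈ A'
  swapEdge_eq (A' : Finset {e : E // e ≠ g}) (x y : {e : E // e ≠ g}) :
    Φ (swapEdge A' x y) = swapEdge (Φ A') x y
  isSpanningForest_iff (A' : Finset {e : E // e ≠ g}) :
    IsSpanningForest ends' A' ↔ IsSpanningForest ends (Φ A')

lemma isForestLift_deleteEnds (hg : ¬IsIsthmus ends g) :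
    IsForestLift ends (deleteEnds ends g) (liftEdges g) :=
  ⟨fun _ _ => mem_liftEdges, liftEdges_swapEdge, isSpanningForest_deleteEnds_iff hg⟩

lemma isForestLift_contractEnds (hg : ends g = s(a, b)) (hab : a ≠ b) :
    IsForestLift ends (contractEnds ends g a b) fun A' => insert g (liftEdges g A') :=
  ⟨fun _ x => by rw [Finset.mem_insert, mem_liftEdges, or_iff_right x.2],
    insert_liftEdges_swapEdge, isSpanningForest_contractEnds_iff hg hab⟩

namespace IsForestLift

variable [LinearOrder E] {ends' : {e : E // e ≠ g} → Sym2 V'}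
  {Φ : Finset {e : E // e ≠ g} → Finset E}

lemma internallyActive_iff (hΦ : IsForestLift ends ends' Φ) (hmin : IsBot g)
    (F' : Finset {e : E // e ≠ g}) (x : {e : E // e ≠ g}) :
    InternallyActive ends (Φ F') x ↔ InternallyActive ends' F' x := by
  rw [InternallyActive, InternallyActive, hΦ.mem_iff]
  refine and_congr_right fun _ => not_congr ⟨?_, ?_⟩
  · rintro ⟨f, hf, hxf, hF⟩
    have hfg : f ≠ g := ((hmin x).trans_lt hxf).ne'
    refine ⟨⟨f, hfg⟩, fun h => hf ((hΦ.mem_iff _ _).mpr h), hxf, ?_⟩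
    rwa [hΦ.isSpanningForest_iff, hΦ.swapEdge_eq]
  · rintro ⟨f, hf, hxf, hF⟩
    refine ⟨f, fun h => hf ((hΦ.mem_iff _ _).mp h), hxf, ?_⟩
    rwa [hΦ.isSpanningForest_iff, hΦ.swapEdge_eq] at hF

lemma externallyActive_iff (hΦ : IsForestLift ends ends' Φ) (hmin : IsBot g)
    (F' : Finset {e : E // e ≠ g}) (x : {e : E // e ≠ g}) :
    ExternallyActive ends (Φ F') x ↔ ExternallyActive ends' F' x := by
  rw [ExternallyActive, ExternallyActive, hΦ.mem_iff]
  refine and_congr_right fun _ => not_congr ⟨?_, ?_⟩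
  · rintro ⟨f, hf, hxf, hF⟩
    have hfg : f ≠ g := ((hmin x).trans_lt hxf).ne'
    refine ⟨⟨f, hfg⟩, (hΦ.mem_iff _ ⟨f, hfg⟩).mp hf, hxf, ?_⟩
    rwa [hΦ.isSpanningForest_iff, hΦ.swapEdge_eq]
  · rintro ⟨f, hf, hxf, hF⟩
    refine ⟨f, (hΦ.mem_iff _ _).mpr hf, hxf, ?_⟩
    rwa [hΦ.isSpanningForest_iff, hΦ.swapEdge_eq] at hF

lemma activity_eq (hΦ : IsForestLift ends ends' Φ) (hmin : IsBot g)
    (F' : Finset {e : E // e ≠ g}) :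
    activity ends (Φ F') = activity ends' F' +
      ((if InternallyActive ends (Φ F') g then 1 else 0) +
        if ExternallyActive ends (Φ F') g then 1 else 0) := by
  rw [activity, activity, intAct, extAct, intAct, extAct,
    Finset.card_filter_univ_eq_card_filter_subtype_ne_add g _ _ (hΦ.internallyActive_iff hmin F'),
    Finset.card_filter_univ_eq_card_filter_subtype_ne_add g _ _ (hΦ.externallyActive_iff hmin F')]
  ring

end IsForestLift

end ForestLift

section Recurrence

variable {V E : Type} [Fintype V] [Fintype E] [DecidableEq E] {ends : E → Sym2 V}
  {F : Finset E} {g : E} {a b : V}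

lemma sum_filter_mem_eq_sum_contractEnds (hg : ends g = s(a, b)) (hab : a ≠ b)
    (φ : Finset E → ℕ) :
    ∑ F ∈ (spanningForests ends).filter (g ∈ ·), φ F =
      ∑ A' ∈ spanningForests (contractEnds ends g a b), φ (insert g (liftEdges g A')) := by
  symm
  refine Finset.sum_nbij' (fun A' => insert g (liftEdges g A')) (fun F => F.subtype (· ≠ g))
    ?_ ?_ (fun A' _ => subtype_insert_liftEdges A') ?_ fun _ _ => rfl
  · simp [mem_spanningForests, isSpanningForest_contractEnds_iff hg hab]
  · intro F hF
    rw [Finset.mem_filter, mem_spanningForests] at hF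
    rw [mem_spanningForests, isSpanningForest_contractEnds_iff hg hab, liftEdges_subtype,
      Finset.insert_erase hF.2]
    exact hF.1
  · intro F hF
    rw [liftEdges_subtype, Finset.insert_erase (Finset.mem_filter.mp hF).2]

lemma sum_filter_notMem_eq_sum_deleteEnds (hg : ¬IsIsthmus ends g) (φ : Finset E → ℕ) :
    ∑ F ∈ (spanningForests ends).filter (g ∉ ·), φ F =
      ∑ A' ∈ spanningForests (deleteEnds ends g), φ (liftEdges g A') := by
  symm
  refine Finset.sum_nbij' (liftEdges g) (fun F => F.subtype (· ≠ g))
    ?_ ?_ (fun A' _ => subtype_liftEdges A') ?_ fun _ _ => rfl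
  · simp [mem_spanningForests, isSpanningForest_deleteEnds_iff hg, notMem_liftEdges_self]
  · intro F hF
    rw [Finset.mem_filter, mem_spanningForests] at hF
    rw [mem_spanningForests, isSpanningForest_deleteEnds_iff hg, liftEdges_subtype,
      Finset.erase_eq_of_notMem hF.2]
    exact hF.1
  · intro F hF
    rw [liftEdges_subtype, Finset.erase_eq_of_notMem (Finset.mem_filter.mp hF).2]

variable [LinearOrder E]

lemma externallyActive_of_isDiag (hg : (ends g).IsDiag) (hgF : g ∉ F) :
    ExternallyActive ends F g :=
  ⟨hgF, fun ⟨_, _, _, hF⟩ => hF.not_isDiag (Finset.mem_insert_self g _) hg⟩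

lemma internallyActive_of_isIsthmus (hg : IsIsthmus ends g) (hgF : g ∈ F) :
    InternallyActive ends F g := by
  refine ⟨hgF, fun ⟨f, _, hgf, hF⟩ => ?_⟩
  have hg' := hF.mem_of_isIsthmus hg
  rw [swapEdge, Finset.mem_insert, Finset.mem_erase] at hg'
  exact hg'.elim hgf.ne (fun h => h.1 rfl)

lemma IsSpanningForest.not_internallyActive_of_isBot (hF : IsSpanningForest ends F)
    (hmin : IsBot g) (hg : ¬IsIsthmus ends g) : ¬InternallyActive ends F g :=
  fun ⟨hgF, hact⟩ =>
    let ⟨f, hfF, hfg, hF'⟩ := hF.exists_isSpanningForest_swapEdge_of_mem hgF hg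
    hact ⟨f, hfF, (hmin f).lt_of_ne hfg.symm, hF'⟩

lemma IsSpanningForest.not_externallyActive_of_isBot (hF : IsSpanningForest ends F)
    (hmin : IsBot g) (hg : ¬(ends g).IsDiag) : ¬ExternallyActive ends F g :=
  fun ⟨hgF, hact⟩ =>
    let ⟨e, heF, hF'⟩ := hF.exists_isSpanningForest_swapEdge_of_notMem hgF hg
    hact ⟨e, heF, (hmin e).lt_of_ne (by rintro rfl; exact hgF heF), hF'⟩

lemma activity_insert_liftEdges (hmin : IsBot g) (hg : ends g = s(a, b)) (hab : a ≠ b)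
    {A' : Finset {e : E // e ≠ g}} (hA' : IsSpanningForest (contractEnds ends g a b) A') :
    activity ends (insert g (liftEdges g A')) =
      activity (contractEnds ends g a b) A' + if IsIsthmus ends g then 1 else 0 := by
  have hΦ := isForestLift_contractEnds hg hab
  have hF := (hΦ.isSpanningForest_iff A').mp hA'
  rw [hΦ.activity_eq hmin,
    if_neg fun h : ExternallyActive ends _ g => h.1 (Finset.mem_insert_self _ _), add_zero]
  by_cases hi : IsIsthmus ends g
  · rw [if_pos (internallyActive_of_isIsthmus hi (Finset.mem_insert_self _ _)), if_pos hi]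
  · rw [if_neg (hF.not_internallyActive_of_isBot hmin hi), if_neg hi]

lemma activity_liftEdges (hmin : IsBot g) (hg : ¬IsIsthmus ends g)
    {A' : Finset {e : E // e ≠ g}} (hA' : IsSpanningForest (deleteEnds ends g) A') :
    activity ends (liftEdges g A') =
      activity (deleteEnds ends g) A' + if (ends g).IsDiag then 1 else 0 := by
  have hΦ := isForestLift_deleteEnds hg
  have hF := (hΦ.isSpanningForest_iff A').mp hA'
  rw [hΦ.activity_eq hmin,
    if_neg fun h : InternallyActive ends _ g => notMem_liftEdges_self A' h.1, zero_add]
  by_cases hd : (ends g).IsDiag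
  · rw [if_pos (externallyActive_of_isDiag hd (notMem_liftEdges_self A')), if_pos hd]
  · rw [if_neg (hF.not_externallyActive_of_isBot hmin hd), if_neg hd]

lemma activitySum_of_isEmpty [IsEmpty E] (ends : E → Sym2 V) : activitySum ends = 1 := by
  have hF : IsSpanningForest ends ∅ := ⟨by simp [kc_empty], by rw [Finset.univ_eq_empty]⟩
  simp [activitySum, spanningForests, activity, Finset.univ_eq_empty, Finset.filter_singleton, hF,
    intAct, extAct]

lemma activitySum_eq_of_isDiag (hmin : IsBot g) (hg : (ends g).IsDiag) :
    activitySum ends = 2 * activitySum (deleteEnds ends g) := by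
  have hgi := not_isIsthmus_of_isDiag hg
  have hempty : (spanningForests ends).filter (g ∈ ·) = ∅ := Finset.filter_eq_empty_iff.mpr
    fun F hF hgF => (mem_spanningForests.mp hF).not_isDiag hgF hg
  rw [activitySum, ← Finset.sum_filter_add_sum_filter_not _ (g ∈ ·), hempty, Finset.sum_empty,
    zero_add, sum_filter_notMem_eq_sum_deleteEnds hgi, activitySum, Finset.mul_sum]
  refine Finset.sum_congr rfl fun A' hA' => ?_
  rw [activity_liftEdges hmin hgi (mem_spanningForests.mp hA'), if_pos hg, pow_succ, mul_comm]

lemma activitySum_eq_of_isIsthmus (hmin : IsBot g) (hg : ends g = s(a, b)) (hab : a ≠ b)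
    (hi : IsIsthmus ends g) : activitySum ends = 2 * activitySum (contractEnds ends g a b) := by
  have hempty : (spanningForests ends).filter (g ∉ ·) = ∅ := Finset.filter_eq_empty_iff.mpr
    fun F hF hgF => hgF ((mem_spanningForests.mp hF).mem_of_isIsthmus hi)
  rw [activitySum, ← Finset.sum_filter_add_sum_filter_not _ (g ∈ ·), hempty, Finset.sum_empty,
    add_zero, sum_filter_mem_eq_sum_contractEnds hg hab, activitySum, Finset.mul_sum]
  refine Finset.sum_congr rfl fun A' hA' => ?_
  rw [activity_insert_liftEdges hmin hg hab (mem_spanningForests.mp hA'), if_pos hi, pow_succ,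
    mul_comm]

lemma activitySum_eq_of_not_isIsthmus (hmin : IsBot g) (hg : ends g = s(a, b)) (hab : a ≠ b)
    (hi : ¬IsIsthmus ends g) :
    activitySum ends = activitySum (contractEnds ends g a b) + activitySum (deleteEnds ends g) := by
  have hd : ¬(ends g).IsDiag := by rwa [hg, Sym2.mk_isDiag_iff]
  rw [activitySum, ← Finset.sum_filter_add_sum_filter_not _ (g ∈ ·),
    sum_filter_mem_eq_sum_contractEnds hg hab, sum_filter_notMem_eq_sum_deleteEnds hi]
  congr 1 <;> refine Finset.sum_congr rfl fun A' hA' => ?_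
  · rw [activity_insert_liftEdges hmin hg hab (mem_spanningForests.mp hA'), if_neg hi, add_zero]
  · rw [activity_liftEdges hmin hi (mem_spanningForests.mp hA'), if_neg hd, add_zero]

end Recurrence

theorem activitySum_eq_two_pow_card {V E : Type} [Fintype V] [Fintype E] [DecidableEq E]
    [LinearOrder E] (ends : E → Sym2 V) : activitySum ends = 2 ^ Fintype.card E := by
  induction hE : Fintype.card E generalizing E with
  | zero =>
    have := Fintype.card_eq_zero_iff.mp hE
    exact activitySum_of_isEmpty ends
  | succ n ih =>
    have : Nonempty E := Fintype.card_pos_iff.mp (by omega)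
    obtain ⟨g, hmin⟩ : ∃ g : E, IsBot g :=
      ⟨Finset.univ.min' Finset.univ_nonempty, fun f => Finset.min'_le _ f (Finset.mem_univ f)⟩
    have hcard : Fintype.card {e : E // e ≠ g} = n := by
      rw [Fintype.card_subtype_compl, Fintype.card_subtype_eq, hE, Nat.add_sub_cancel]
    induction hg : ends g using Sym2.ind with | h a b =>
    obtain rfl | hab := eq_or_ne a b
    · rw [activitySum_eq_of_isDiag hmin (hg ▸ Sym2.mk_isDiag_iff.mpr rfl), ih _ hcard, pow_succ,
        mul_comm]
    by_cases hi : IsIsthmus ends g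
    · rw [activitySum_eq_of_isIsthmus hmin hg hab hi, ih _ hcard, pow_succ, mul_comm]
    · rw [activitySum_eq_of_not_isIsthmus hmin hg hab hi, ih _ hcard, ih _ hcard, pow_succ,
        mul_two]

/-- `∑_{F spanning forest} 2^{i(F)+e(F)} = 2^{|E|}`. -/
theorem sum_two_pow_activities {V E : Type} [Fintype V] [Fintype E] [DecidableEq E]
    [LinearOrder E] (ends : E → Sym2 V) :
    ∑ F ∈ Finset.univ.powerset.filter (IsSpanningForest ends),
        2 ^ ((intAct ends F).card + (extAct ends F).card) =
      2 ^ Fintype.card E :=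
  activitySum_eq_two_pow_card ends
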